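/- Shift-invariance of any model composed with the transformation: let T > 0, let f : AddCircle T → ℂ be integrable with c₁(f) ≠ 0, let φₐ : ℝ, and let t' : ℝ, with g(x) := f(x − ↑t'). Then for every type Y and every map h : (AddCircle T → ℂ) → Y (an arbitrary classifier), h(𝒯(g, φₐ)) = h(𝒯(f, φₐ)); i.e., any classifier precomposed with the transformation 𝒯(·, φₐ) produces identical outputs on all circularly shifted variants of a signal. -/

import Mathlib

open MeasureTheory

/-- `theta T f φ` is the representative in `[0, 2π)` of `arg (c₁ f) − φ` modulo `2π`. -/
noncomputable def theta (T : ℝ) [Fact (0 < T)] (f : AddCircle T → ℂ) (φ : ℝ) : ℝ :=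
  toIcoMod Real.two_pi_pos 0 (Complex.arg (fourierCoeff f 1) - φ)

/-- The computed time-shift amount `Δφ(f, φ)`. -/
noncomputable def deltaPhi (T : ℝ) [Fact (0 < T)] (f : AddCircle T → ℂ) (φ : ℝ) : ℝ :=
  if theta T f φ > Real.pi then (theta T f φ - 2 * Real.pi) * T / (2 * Real.pi)
  else theta T f φ * T / (2 * Real.pi)

/-- The transformation `𝒯(f, φ)`: circularly shift `f` by `Δφ(f, φ)`. -/
noncomputable def transf (T : ℝ) [Fact (0 < T)] (f : AddCircle T → ℂ) (φ : ℝ) :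
    AddCircle T → ℂ :=
  fun x => f (x - (deltaPhi T f φ : AddCircle T))

/-!
Shifting `f` by `t` multiplies `c₁(f)` by `e^{-2πit/T}`, i.e. rotates `arg c₁(f)` by `-2πt/T`.
Modulo `T`, `Δφ(f, φ)` is just `(arg c₁(f) - φ) · T / 2π` (the two branches of its definition
differ by one period), so `Δφ(f(· - t), φ) ≡ Δφ(f, φ) - t`, and `𝒯` undoes the shift exactly.
-/

open Real Complex

namespace AddCircle

noncomputable def toAngle (T : ℝ) [Fact (0 < T)] : AddCircle T ≃+ Angle :=
  equivAddCircle T (2 * π) (Fact.out : 0 < T).ne' two_pi_pos.ne'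

variable {T : ℝ} [Fact (0 < T)]

theorem toAngle_coe (x : ℝ) : toAngle T x = (x * (T⁻¹ * (2 * π)) : ℝ) :=
  equivAddCircle_apply_mk _ _ _ _ x

theorem arg_toCircle (x : AddCircle T) : (arg (toCircle x) : Angle) = toAngle T x := by
  induction x using QuotientAddGroup.induction_on with
  | H x =>
    rw [toCircle_apply_mk, ← Angle.toCircle_coe, Angle.arg_toCircle, toAngle_coe]
    congr 1
    ring

end AddCircle

open AddCircle

section

variable {T : ℝ}

theorem fourier_apply_add (n : ℤ) (x y : AddCircle T) :
    fourier n (x + y) = fourier n x * fourier n y := by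
  simp only [fourier_apply, smul_add, toCircle_add, Circle.coe_mul]

variable [Fact (0 < T)]

theorem fourierCoeff_comp_sub {E : Type*} [NormedAddCommGroup E] [NormedSpace ℂ E]
    (f : AddCircle T → E) (t : AddCircle T) (n : ℤ) :
    fourierCoeff (fun x => f (x - t)) n = fourier (-n) t • fourierCoeff f n := by
  calc fourierCoeff (fun x => f (x - t)) n
      = ∫ x, fourier (-n) (x + t) • f (x + t - t) ∂haarAddCircle :=
        (integral_add_right_eq_self (fun x => fourier (-n) x • f (x - t)) t).symm
    _ = ∫ x, fourier (-n) t • (fourier (-n) x • f x) ∂haarAddCircle := by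
        simp only [fourier_apply_add, add_sub_cancel_right, mul_comm, mul_smul]
    _ = fourier (-n) t • fourierCoeff f n := integral_smul _ _

theorem arg_fourierCoeff_one_comp_sub {f : AddCircle T → ℂ} (hc : fourierCoeff f 1 ≠ 0)
    (t : AddCircle T) :
    (arg (fourierCoeff (fun x => f (x - t)) 1) : Angle)
      = arg (fourierCoeff f 1) - toAngle T t := by
  rw [fourierCoeff_comp_sub, smul_eq_mul, fourier_apply,
    arg_mul_coe_angle (Circle.coe_ne_zero _) hc, neg_smul, one_smul, arg_toCircle, map_neg,
    neg_add_eq_sub]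

theorem deltaPhi_coe (f : AddCircle T → ℂ) (φ : ℝ) :
    (deltaPhi T f φ : AddCircle T) = (toAngle T).symm (arg (fourierCoeff f 1) - φ : ℝ) := by
  have hT : T ≠ 0 := (Fact.out : 0 < T).ne'
  have h_toAngle : toAngle T (deltaPhi T f φ) = theta T f φ := by
    rw [toAngle_coe, deltaPhi]
    split_ifs
    · rw [show (theta T f φ - 2 * π) * T / (2 * π) * (T⁻¹ * (2 * π)) = theta T f φ - 2 * π by
        field_simp, Angle.coe_sub, Angle.coe_two_pi, sub_zero]
    · congr 1
      field_simp
  rw [AddEquiv.eq_symm_apply, h_toAngle]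
  exact Angle.coe_toIcoMod _ _

theorem transf_comp_sub {f : AddCircle T → ℂ} (hc : fourierCoeff f 1 ≠ 0) (t : AddCircle T)
    (φ : ℝ) : transf T (fun x => f (x - t)) φ = transf T f φ := by
  suffices (deltaPhi T (fun x => f (x - t)) φ : AddCircle T) + t = deltaPhi T f φ by
    funext x
    simp only [transf, sub_sub, this]
  rw [deltaPhi_coe, deltaPhi_coe, Angle.coe_sub, arg_fourierCoeff_one_comp_sub hc, sub_right_comm,
    map_sub, AddEquiv.symm_apply_apply, sub_add_cancel, ← Angle.coe_sub]

end

theorem classifier_transf_shift_invariant_general (T : ℝ) [Fact (0 < T)] (f : AddCircle T → ℂ)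
    (hc : fourierCoeff f 1 ≠ 0)
    (φₐ t' : ℝ) (Y : Type*) (h : (AddCircle T → ℂ) → Y) :
    h (transf T (fun x => f (x - (t' : AddCircle T))) φₐ) = h (transf T f φₐ) :=
  congrArg h (transf_comp_sub hc _ φₐ)

/-- Any classifier precomposed with the transformation `𝒯(·, φₐ)` produces identical
outputs on all circularly shifted variants of a signal. -/
theorem classifier_transf_shift_invariant (T : ℝ) [Fact (0 < T)] (f : AddCircle T → ℂ)
    (hf : Integrable f AddCircle.haarAddCircle) (hc : fourierCoeff f 1 ≠ 0)
    (φₐ t' : ℝ) (Y : Type*) (h : (AddCircle T → ℂ) → Y) :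
    h (transf T (fun x => f (x - (t' : AddCircle T))) φₐ) = h (transf T f φₐ) :=
  classifier_transf_shift_invariant_general T f hc φₐ t' Y h
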